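/- The function H defined by the dynamic programming recurrences — base case H(d, {d}) = 0 for destinations d, subset merging H(v, S) = min over nonempty F ⊊ S of (H(v,F) + H(v, S\F)) combined with relaxation H(v,S) = min over edges (v,u) of (H(u,S) + max_{d∈S} x(d) · e(v,u)), iterated to a fixed point — equals the true minimum Steiner-flow cost δ(v, S) for every node v and nonempty destination subset S. -/

import Mathlib

namespace OST

variable {V : Type} [DecidableEq V]

/-- A feasible flow for the outflow-constrained minimum flow problem. -/
structure Feasible (E : V → V → Prop) (s : V) (D : Set V) (x : V → ℝ)
    (f : V → V → ℝ) : Prop where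
  nonneg : ∀ i j, 0 ≤ f i j
  support : ∀ i j, ¬ E i j → f i j = 0
  /-- at every non-source node, every outflow value is bounded by some inflow value
      (max outflow ≤ max inflow) -/
  conserve : ∀ i, i ≠ s → ∀ j, ∃ k, f i j ≤ f k i
  /-- every destination receives inflow at least its demand -/
  demand : ∀ d ∈ D, ∃ i, x d ≤ f i d

/-- Total weighted cost of a flow. -/
noncomputable def cost [Fintype V] (e f : V → V → ℝ) : ℝ :=
  ∑ i, ∑ j, e i j * f i j

/-- The (undirected) flow-carrying edge relation. -/
def carry (f : V → V → ℝ) (a b : V) : Prop := 0 < f a b ∨ 0 < f b a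

/-- Directed reachability inside a set of directed edges. -/
def reach (T : Set (V × V)) (a b : V) : Prop :=
  Relation.ReflTransGen (fun p q => (p, q) ∈ T) a b

/-- `T` is a tree rooted at `v`, edges directed away from the root. -/
structure IsRootedTree (E : V → V → Prop) (v : V) (T : Set (V × V)) : Prop where
  edges : ∀ p ∈ T, E p.1 p.2
  parent_unique : ∀ u u' w, (u, w) ∈ T → (u', w) ∈ T → u = u'
  root_no_parent : ∀ u, (u, v) ∉ T
  reach_root : ∀ p ∈ T, reach T v p.1

/-- The rooted edge set `T` connects `v` to every node of `S`. -/
def Spans (T : Set (V × V)) (v : V) (S : Set V) : Prop := ∀ d ∈ S, reach T v d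

/-- Maximum demand among destinations of `S` lying below node `w` in `T`
    (`0` if there are none, by convention of `sSup` on `ℝ`). -/
noncomputable def maxBelow (T : Set (V × V)) (S : Set V) (x : V → ℝ) (w : V) : ℝ :=
  sSup (x '' {d ∈ S | reach T w d})

/-- Steiner-flow cost of a rooted tree: each edge is charged its weight times the
    maximum demand among destinations of `S` below it. -/
noncomputable def treeCost (e : V → V → ℝ) (x : V → ℝ) (S : Set V)
    (T : Finset (V × V)) : ℝ :=
  ∑ p ∈ T, e p.1 p.2 * maxBelow (↑T) S x p.2

/-- Minimum Steiner-flow cost from root `v` to destination set `S`. -/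
noncomputable def delta (E : V → V → Prop) (e : V → V → ℝ) (x : V → ℝ)
    (v : V) (S : Set V) : ℝ :=
  sInf {c | ∃ T : Finset (V × V),
    IsRootedTree E v ↑T ∧ Spans (↑T) v S ∧ c = treeCost e x S T}

/-- `l` lists the successive vertices of a walk starting at the given vertex. -/
def IsWalk (R : V → V → Prop) : V → List V → Prop
  | _, [] => True
  | a, b :: l => R a b ∧ IsWalk R b l

/-- Total edge weight of a walk. -/
noncomputable def walkCost (e : V → V → ℝ) : V → List V → ℝ
  | _, [] => 0
  | a, b :: l => e a b + walkCost e b l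

/-- Weighted shortest-path distance. -/
noncomputable def dist (E : V → V → Prop) (e : V → V → ℝ) (a b : V) : ℝ :=
  sInf {c | ∃ l : List V, IsWalk E a l ∧
    (a :: l).getLast (List.cons_ne_nil a l) = b ∧ c = walkCost e a l}

/-- Hop distance in a directed relation. -/
noncomputable def hopDist (R : V → V → Prop) (a b : V) : ℕ :=
  sInf {n | ∃ l : List V, IsWalk R a l ∧
    (a :: l).getLast (List.cons_ne_nil a l) = b ∧ l.length = n}

/-- A feasible flow supported on the rooted tree `T`. -/
structure TreeFeasible (T : Set (V × V)) (D : Set V) (x : V → ℝ)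
    (f : V → V → ℝ) : Prop where
  nonneg : ∀ i j, 0 ≤ f i j
  support : ∀ i j, (i, j) ∉ T → f i j = 0
  /-- flow is nonincreasing away from the root -/
  mono : ∀ u w z, (u, w) ∈ T → (w, z) ∈ T → f w z ≤ f u w
  /-- each destination's parent edge carries at least its demand -/
  demand : ∀ d ∈ D, ∀ u, (u, d) ∈ T → x d ≤ f u d

end OST

/-!
Both inequalities are proved by induction on the size of the instance.

`H ≤ δ`: cut a tree spanning `S` at its root `v`. If `v ∈ S`, merge `{v}` (value `0`) with
`S \ {v}`. If all of `S` hangs below one child `c`, relax along `(v, c)`: the edge `(v, c)` is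
charged exactly `max_{d ∈ S} x d`, and the rest of the cost bounds the subtree at `c`. Otherwise
merge the destinations below `c` with the others, served by two complementary parts of the tree.

`δ ≤ H`: `δ` is subadditive under union of destination sets and satisfies the relaxation
inequality; both follow from one greedy tree construction. Among the vertices `w` with
`H(w, S) < δ(w, S)`, one with least `H(w, S)` cannot exist: its value is the base case, a merge
of smaller sets (handled by induction), or a relaxation through a `u` with `H(u, S) < H(w, S)`,
which by minimality satisfies `δ(u, S) ≤ H(u, S)`.
-/

namespace OST

open Finset

open scoped Classical

section RootedTree

variable {V : Type} {E : V → V → Prop} {T T' : Set (V × V)} {S : Set V} {v a b c d w : V}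

theorem reach_mono (h : T ⊆ T') (hr : reach T a b) : reach T' a b :=
  Relation.ReflTransGen.mono (fun _ _ hab => h hab) _ _ hr

theorem exists_boundary_edge {R : V → V → Prop} {P : V → Prop}
    (h : Relation.ReflTransGen R a b) (ha : P a) (hb : ¬ P b) :
    ∃ c d, R c d ∧ P c ∧ ¬ P d := by
  induction h with
  | refl => exact absurd ha hb
  | @tail c d _ hcd ih => exact if hc : P c then ⟨c, d, hcd, hc, hb⟩ else ih hc

theorem reach_sep_of_reach_below {Q : V × V → Prop} (h : reach T a d)
    (hQ : ∀ p ∈ T, reach T p.2 d → Q p) : reach {p ∈ T | Q p} a d := by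
  induction h using Relation.ReflTransGen.head_induction_on with
  | refl => exact .refl
  | head hab hbd ih => exact .head ⟨hab, hQ _ hab hbd⟩ ih

theorem reach_subtree_of_reach (h : reach T c w) : reach {p ∈ T | reach T c p.1} c w := by
  induction h with
  | refl => exact .refl
  | tail hcu huw ih => exact .tail ih ⟨huw, hcu⟩

theorem isRootedTree_empty : IsRootedTree E v ∅ where
  edges _ h := h.elim
  parent_unique _ _ _ h := h.elim
  root_no_parent _ h := h.elim
  reach_root _ h := h.elim

namespace IsRootedTree

theorem eq_root_of_reach (hT : IsRootedTree E v T) (h : reach T w v) : w = v := by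
  rcases Relation.ReflTransGen.cases_tail h with h | ⟨u, -, hu⟩
  · exact h.symm
  · exact absurd hu (hT.root_no_parent u)

theorem not_reach_of_mem (hT : IsRootedTree E v T) (hab : (a, b) ∈ T) : ¬ reach T b a := by
  intro hba
  -- going down from the root, the first node on the cycle `b → ⋯ → a → b` would need a parent
  -- both on and off the cycle
  have off_cycle : ∀ w, reach T v w → ¬ (reach T b w ∧ reach T w a) := by
    intro w hw
    induction hw with
    | refl => exact fun h => hT.root_no_parent a (hT.eq_root_of_reach h.1 ▸ hab)
    | @tail u w _ huw ih =>
      rintro ⟨hbw, hwa⟩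
      rcases Relation.ReflTransGen.cases_tail hbw with rfl | ⟨u', hbu', hu'w⟩
      · obtain rfl := hT.parent_unique _ _ _ huw hab
        exact ih ⟨hba, .refl⟩
      · obtain rfl := hT.parent_unique _ _ _ hu'w huw
        exact ih ⟨hbu', .head huw hwa⟩
  exact off_cycle b (.tail (hT.reach_root _ hab) hab) ⟨.refl, hba⟩

theorem mem_of_reach (hT : IsRootedTree E v T) (hsub : T' ⊆ T) (hab : (a, b) ∈ T)
    (hb : reach T' v b) : reach T' v a ∧ (a, b) ∈ T' := by
  rcases Relation.ReflTransGen.cases_tail hb with rfl | ⟨u, hu, hub⟩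
  · exact absurd hab (hT.root_no_parent a)
  · rw [← hT.parent_unique _ _ _ (hsub hub) hab]
    exact ⟨hu, hub⟩

theorem reach_of_reach_of_subset (hT : IsRootedTree E v T) (hsub : T' ⊆ T) (h : reach T b d)
    (hd : reach T' v d) : reach T' v b ∧ reach T' b d := by
  induction h with
  | refl => exact ⟨hd, .refl⟩
  | @tail w d _ hwd ih =>
    obtain ⟨hvw, hwd'⟩ := hT.mem_of_reach hsub hwd hd
    obtain ⟨hvb, hbw⟩ := ih hvw
    exact ⟨hvb, .tail hbw hwd'⟩

theorem subtree (hT : IsRootedTree E v T) (c : V) : IsRootedTree E c {p ∈ T | reach T c p.1} where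
  edges p hp := hT.edges p hp.1
  parent_unique u u' w hu hu' := hT.parent_unique u u' w hu.1 hu'.1
  root_no_parent _ hu := hT.not_reach_of_mem hu.1 hu.2
  reach_root _ hp := reach_subtree_of_reach hp.2

theorem reach_sep_of_closed (hT : IsRootedTree E v T) {Q : V → Prop}
    (hQ : ∀ a b, (a, b) ∈ T → Q b → a = v ∨ Q a) (h : reach T v w) (hw : w = v ∨ Q w) :
    reach {p ∈ T | Q p.2} v w := by
  induction h with
  | refl => exact .refl
  | @tail u w _ huw ih =>
    rcases hw with rfl | hw
    · exact .refl
    · exact .tail (ih (hQ _ _ huw hw)) ⟨huw, hw⟩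

theorem sep_of_closed (hT : IsRootedTree E v T) {Q : V → Prop}
    (hQ : ∀ a b, (a, b) ∈ T → Q b → a = v ∨ Q a) : IsRootedTree E v {p ∈ T | Q p.2} where
  edges p hp := hT.edges p hp.1
  parent_unique u u' w hu hu' := hT.parent_unique u u' w hu.1 hu'.1
  root_no_parent u hu := hT.root_no_parent u hu.1
  reach_root p hp := hT.reach_sep_of_closed hQ (hT.reach_root p hp.1) (hQ _ _ hp.1 hp.2)

theorem split_at_child (hT : IsRootedTree E v T) (hvc : (v, c) ∈ T) (hspan : Spans T v S) :
    (IsRootedTree E v {p ∈ T | reach T c p.2} ∧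
      Spans {p ∈ T | reach T c p.2} v {d ∈ S | reach T c d}) ∧
    (IsRootedTree E v {p ∈ T | ¬ reach T c p.2} ∧
      Spans {p ∈ T | ¬ reach T c p.2} v (S \ {d ∈ S | reach T c d})) := by
  have hbranch : ∀ a b, (a, b) ∈ T → reach T c b → a = v ∨ reach T c a := by
    intro a b hab hcb
    rcases Relation.ReflTransGen.cases_tail hcb with rfl | ⟨a', hca', ha'b⟩
    · exact .inl (hT.parent_unique _ _ _ hab hvc)
    · exact .inr (hT.parent_unique _ _ _ ha'b hab ▸ hca')
  have hrest : ∀ a b, (a, b) ∈ T → ¬ reach T c b → a = v ∨ ¬ reach T c a :=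
    fun _ _ hab hb => .inr fun ha => hb (.tail ha hab)
  exact ⟨⟨hT.sep_of_closed hbranch,
      fun d hd => hT.reach_sep_of_closed hbranch (hspan d hd.1) (.inr hd.2)⟩,
    hT.sep_of_closed hrest,
      fun d hd => hT.reach_sep_of_closed hrest (hspan d hd.1) (.inr fun h => hd.2 ⟨hd.1, h⟩)⟩

theorem insert_leaf (hT : IsRootedTree E v T) (hab : E a b) (ha : reach T v a)
    (hb : ¬ reach T v b) : IsRootedTree E v (insert (a, b) T) where
  edges p hp := by
    rcases hp with rfl | hp
    exacts [hab, hT.edges p hp]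
  parent_unique u u' w hu hu' := by
    have hnew : ∀ u, (u, b) ∉ T := fun u hu => hb (.tail (hT.reach_root _ hu) hu)
    rcases hu with hu | hu <;> rcases hu' with hu' | hu'
    · simp_all
    · simp only [Prod.mk.injEq] at hu; exact absurd (hu.2 ▸ hu') (hnew u')
    · simp only [Prod.mk.injEq] at hu'; exact absurd (hu'.2 ▸ hu) (hnew u)
    · exact hT.parent_unique u u' w hu hu'
  root_no_parent u hu := by
    rcases hu with hu | hu
    · simp only [Prod.mk.injEq] at hu; exact hb (hu.2 ▸ .refl)
    · exact hT.root_no_parent u hu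
  reach_root p hp := by
    have hsub : T ⊆ insert (a, b) T := Set.subset_insert _ _
    rcases hp with rfl | hp
    exacts [reach_mono hsub ha, reach_mono hsub (hT.reach_root p hp)]

end IsRootedTree
end RootedTree

section Extension

variable {V : Type} [Fintype V] [DecidableEq V] {E : V → V → Prop} {v : V}

theorem exists_rootedTree_extend {T₀ P : Finset (V × V)} (hT₀ : IsRootedTree E v ↑T₀)
    (hP : ∀ p ∈ P, E p.1 p.2) :
    ∃ T : Finset (V × V), T₀ ⊆ T ∧ T ⊆ T₀ ∪ P ∧ IsRootedTree E v ↑T ∧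
      ∀ w, reach ↑(T₀ ∪ P) v w → reach ↑T v w := by
  -- take an admissible tree reaching as many nodes as possible
  obtain ⟨T, hT, hmax⟩ := ((T₀ ∪ P).powerset.filter fun T => T₀ ⊆ T ∧ IsRootedTree E v ↑T)
    |>.exists_max_image (fun T => #{w | reach ↑T v w})
      ⟨T₀, mem_filter.2 ⟨mem_powerset.2 subset_union_left, subset_rfl, hT₀⟩⟩
  simp only [mem_filter, mem_powerset] at hT hmax
  obtain ⟨hTsub, hT₀T, hT⟩ := hT
  refine ⟨T, hT₀T, hTsub, hT, fun w hw => ?_⟩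
  by_contra hnw
  obtain ⟨a, b, hab, ha, hb⟩ := exists_boundary_edge hw (P := reach ↑T v) .refl hnw
  have hab' : (a, b) ∈ T₀ ∪ P := hab
  have hE : E a b := by
    rcases mem_union.1 hab' with h | h
    exacts [hT₀.edges _ h, hP _ h]
  have hbigger := hmax (insert (a, b) T)
    ⟨insert_subset hab' hTsub, hT₀T.trans (subset_insert _ _), by
      simpa using hT.insert_leaf hE ha hb⟩
  refine hbigger.not_gt (card_lt_card ?_)
  refine (ssubset_iff_of_subset fun u hu => ?_).2 ⟨b, ?_, by simpa using hb⟩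
  · simp only [mem_filter, mem_univ, true_and] at hu ⊢
    exact reach_mono (by simp [Set.subset_insert]) hu
  · simp only [mem_filter, mem_univ, true_and, coe_insert]
    exact .tail (reach_mono (Set.subset_insert _ _) ha) (Set.mem_insert _ _)

theorem exists_spanning_rootedTree (hconn : ∀ a b : V, Relation.ReflTransGen E a b) (v : V) :
    ∃ T : Finset (V × V), IsRootedTree E v ↑T ∧ ∀ w, reach ↑T v w := by
  obtain ⟨T, -, -, hT, hreach⟩ := exists_rootedTree_extend (T₀ := ∅)
    (P := univ.filter fun p => E p.1 p.2) (by simpa using isRootedTree_empty (E := E) (v := v))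
    (by simp)
  refine ⟨T, hT, fun w => hreach w ?_⟩
  exact Relation.ReflTransGen.mono (fun a b (hab : E a b) => by simpa using hab) _ _ (hconn v w)

end Extension

section Cost

variable {V : Type} {E : V → V → Prop} {e : V → V → ℝ} {x : V → ℝ}
  {S S' : Set V} {T T' : Set (V × V)} {v w d : V}

theorem maxBelow_nonneg (hx : ∀ d ∈ S, 0 ≤ x d) : 0 ≤ maxBelow T S x w :=
  Real.sSup_nonneg (by rintro _ ⟨d, ⟨hd, -⟩, rfl⟩; exact hx d hd)

theorem le_maxBelow [Finite V] (hd : d ∈ S) (hr : reach T w d) : x d ≤ maxBelow T S x w :=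
  le_csSup (Set.toFinite _).bddAbove ⟨d, ⟨hd, hr⟩, rfl⟩

theorem maxBelow_le {r : ℝ} (h : ∀ d ∈ S, reach T w d → x d ≤ r) (hr : 0 ≤ r) :
    maxBelow T S x w ≤ r :=
  Real.sSup_le (by rintro _ ⟨d, ⟨hd, hdw⟩, rfl⟩; exact h d hd hdw) hr

theorem maxBelow_mono [Finite V] (hx : ∀ d ∈ S', 0 ≤ x d) (hS : S ⊆ S') (hT : T ⊆ T') :
    maxBelow T S x w ≤ maxBelow T' S' x w :=
  maxBelow_le (fun _ hd hr => le_maxBelow (hS hd) (reach_mono hT hr)) (maxBelow_nonneg hx)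

theorem maxBelow_le_sSup [Finite V] (hx : ∀ d ∈ S, 0 ≤ x d) : maxBelow T S x w ≤ sSup (x '' S) :=
  maxBelow_le (fun d hd _ => le_csSup (Set.toFinite _).bddAbove ⟨d, hd, rfl⟩)
    (Real.sSup_nonneg (by rintro _ ⟨d, hd, rfl⟩; exact hx d hd))

theorem treeCost_le_sum_of_subset [Finite V] {T₁ T : Finset (V × V)} (hT : T₁ ⊆ T)
    (he : ∀ p ∈ T₁, 0 ≤ e p.1 p.2) (hx : ∀ d ∈ S, 0 ≤ x d) (hS : S' ⊆ S) :
    treeCost e x S' T₁ ≤ ∑ p ∈ T₁, e p.1 p.2 * maxBelow ↑T S x p.2 :=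
  sum_le_sum fun p hp =>
    mul_le_mul_of_nonneg_left (maxBelow_mono hx hS (coe_subset.2 hT)) (he p hp)

theorem treeCost_nonneg {T : Finset (V × V)} (he : ∀ p ∈ T, 0 ≤ e p.1 p.2)
    (hx : ∀ d ∈ S, 0 ≤ x d) : 0 ≤ treeCost e x S T :=
  sum_nonneg fun p hp => mul_nonneg (he p hp) (maxBelow_nonneg hx)

theorem finite_treeCosts [Finite V] : {c | ∃ T : Finset (V × V),
    IsRootedTree E v ↑T ∧ Spans (↑T) v S ∧ c = treeCost e x S T}.Finite :=
  (Set.finite_range fun T => treeCost e x S T).subset (by rintro _ ⟨T, -, -, rfl⟩; exact ⟨T, rfl⟩)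

theorem delta_le_treeCost [Finite V] {T : Finset (V × V)} (hT : IsRootedTree E v ↑T)
    (hspan : Spans ↑T v S) : delta E e x v S ≤ treeCost e x S T :=
  csInf_le finite_treeCosts.bddBelow ⟨T, hT, hspan, rfl⟩

theorem delta_singleton_self_nonpos [Finite V] : delta E e x v {v} ≤ 0 := by
  simpa [treeCost] using delta_le_treeCost (e := e) (x := x) (T := ∅) (S := {v})
    (by simpa using isRootedTree_empty (E := E) (v := v)) (by rintro d rfl; exact .refl)

theorem exists_treeCost_eq_delta [Fintype V] [DecidableEq V]
    (hconn : ∀ a b : V, Relation.ReflTransGen E a b) (v : V) (S : Set V) :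
    ∃ T : Finset (V × V), IsRootedTree E v ↑T ∧ Spans ↑T v S ∧
      delta E e x v S = treeCost e x S T := by
  obtain ⟨T, hT, hreach⟩ := exists_spanning_rootedTree hconn v
  have hne : {c | ∃ T : Finset (V × V),
      IsRootedTree E v ↑T ∧ Spans (↑T) v S ∧ c = treeCost e x S T}.Nonempty :=
    ⟨_, T, hT, fun d _ => hreach d, rfl⟩
  exact hne.csInf_mem finite_treeCosts

theorem reach_sep_of_maxBelow_le [Finite V] {S : Set V} {T A : Set (V × V)} {c : V × V → ℝ}
    {a d : V}
    (hd : d ∈ S) (h : reach T a d) (hTA : T ⊆ A) (hc : ∀ p ∈ T, maxBelow T S x p.2 ≤ c p) :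
    reach {p ∈ A | x d ≤ c p} a d :=
  reach_mono (fun _ hp => ⟨hTA hp.1, hp.2⟩) <| reach_sep_of_reach_below h
    fun p hp hpd => (le_maxBelow hd hpd).trans (hc p hp)

end Cost

section CostSplitting

variable {V : Type} [Finite V] {E : V → V → Prop} {e : V → V → ℝ} {x : V → ℝ} {S : Set V}
  {T : Finset (V × V)}

theorem treeCost_filter_add_le (he : ∀ p ∈ T, 0 ≤ e p.1 p.2) (hx : ∀ d ∈ S, 0 ≤ x d)
    (Q : V × V → Prop) {S₁ S₂ : Set V} (h₁ : S₁ ⊆ S) (h₂ : S₂ ⊆ S) :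
    treeCost e x S₁ (T.filter Q) + treeCost e x S₂ (T.filter fun p => ¬ Q p) ≤
      treeCost e x S T := by
  refine (add_le_add ?_ ?_).trans_eq (sum_filter_add_sum_filter_not T Q _)
  · exact treeCost_le_sum_of_subset (filter_subset _ _) (fun p hp => he p (mem_filter.1 hp).1) hx h₁
  · exact treeCost_le_sum_of_subset (filter_subset _ _) (fun p hp => he p (mem_filter.1 hp).1) hx h₂

theorem mul_sSup_add_treeCost_subtree_le {v c : V} (hT : IsRootedTree E v ↑T) (hvc : (v, c) ∈ T)
    (he : ∀ p ∈ T, 0 ≤ e p.1 p.2) (hx : ∀ d ∈ S, 0 ≤ x d) (hbelow : ∀ d ∈ S, reach ↑T c d) :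
    e v c * sSup (x '' S) + treeCost e x S (T.filter fun p => reach ↑T c p.1) ≤
      treeCost e x S T := by
  have hM : maxBelow ↑T S x c = sSup (x '' S) :=
    (maxBelow_le_sSup hx).antisymm <| Real.sSup_le
      (by rintro _ ⟨d, hd, rfl⟩; exact le_maxBelow hd (hbelow d hd)) (maxBelow_nonneg hx)
  have hvc' : (v, c) ∈ T.filter fun p => ¬ reach ↑T c p.1 :=
    mem_filter.2 ⟨hvc, hT.not_reach_of_mem hvc⟩
  rw [add_comm]
  refine (add_le_add (treeCost_le_sum_of_subset (filter_subset _ _)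
    (fun p hp => he p (mem_filter.1 hp).1) hx subset_rfl) ?_).trans_eq
    (sum_filter_add_sum_filter_not T _ _)
  rw [← hM]
  exact single_le_sum (f := fun p => e p.1 p.2 * maxBelow ↑T S x p.2)
    (fun p hp => mul_nonneg (he p (mem_filter.1 hp).1) (maxBelow_nonneg hx)) hvc'

end CostSplitting

section Capacity

variable {V : Type} [Fintype V] [DecidableEq V] {E : V → V → Prop} {e : V → V → ℝ}
  {x : V → ℝ} {v : V}

/-- Greedy construction: destinations are grafted on in order of decreasing demand, each along
a path of edges whose capacity `c` is at least its demand. Since that demand is the smallest so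
far, every edge keeps capacity at least the largest demand below it. -/
theorem exists_rootedTree_maxBelow_le {A : Finset (V × V)} (hA : ∀ p ∈ A, E p.1 p.2)
    (c : V × V → ℝ) (s : Finset V) (hx : ∀ d ∈ s, 0 ≤ x d)
    (hpath : ∀ d ∈ s, reach {p ∈ (A : Set (V × V)) | x d ≤ c p} v d) :
    ∃ T ⊆ A, IsRootedTree E v ↑T ∧ Spans ↑T v ↑s ∧
      ∀ p ∈ T, maxBelow ↑T ↑s x p.2 ≤ c p ∧ ∃ d ∈ s, x d ≤ c p := by
  induction s using Finset.induction_on_min_value x with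
  | empty => exact ⟨∅, empty_subset _, by simpa using isRootedTree_empty, by simp [Spans], by simp⟩
  | insert a s ha hmin ih =>
    obtain ⟨T₀, hT₀A, hT₀, hspan₀, hcap₀⟩ := ih (fun d hd => hx d (mem_insert_of_mem hd))
      (fun d hd => hpath d (mem_insert_of_mem hd))
    set P := A.filter fun p => x a ≤ c p
    obtain ⟨T, hT₀T, hTsub, hT, hreach⟩ :=
      exists_rootedTree_extend hT₀ (P := P) fun p hp => hA p (mem_filter.1 hp).1
    have hca : ∀ p ∈ T, x a ≤ c p := by
      intro p hp
      rcases mem_union.1 (hTsub hp) with hp₀ | hpP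
      · obtain ⟨d, hd, hdc⟩ := (hcap₀ p hp₀).2
        exact (hmin d hd).trans hdc
      · exact (mem_filter.1 hpP).2
    refine ⟨T, hTsub.trans (union_subset hT₀A (filter_subset _ _)), hT, ?_,
      fun p hp => ⟨maxBelow_le (fun d hd hpd => ?_) ((hx a (mem_insert_self a s)).trans
        (hca p hp)), a, mem_insert_self a s, hca p hp⟩⟩
    · intro d hd
      rcases mem_insert.1 hd with rfl | hd
      · exact hreach d (reach_mono (by simp [P]) (hpath d (mem_insert_self d s)))
      · exact reach_mono (coe_subset.2 hT₀T) (hspan₀ d hd)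
    · rcases mem_insert.1 hd with rfl | hd
      · exact hca p hp
      -- an old destination below `p` is reached inside the old tree, so `p` is an old edge
      obtain ⟨hvp, hpd⟩ := hT.reach_of_reach_of_subset (coe_subset.2 hT₀T) hpd (hspan₀ d hd)
      have hp₀ : p ∈ T₀ := (hT.mem_of_reach (coe_subset.2 hT₀T) hp hvp).2
      exact (le_maxBelow hd hpd).trans (hcap₀ p hp₀).1

theorem delta_le_sum_of_reach {A : Finset (V × V)} (hA : ∀ p ∈ A, E p.1 p.2)
    (he : ∀ p ∈ A, 0 ≤ e p.1 p.2) (c : V × V → ℝ) (hc : ∀ p ∈ A, 0 ≤ c p) {S : Set V}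
    (hx : ∀ d ∈ S, 0 ≤ x d) (hpath : ∀ d ∈ S, reach {p ∈ (A : Set (V × V)) | x d ≤ c p} v d) :
    delta E e x v S ≤ ∑ p ∈ A, e p.1 p.2 * c p := by
  obtain ⟨T, hTA, hT, hspan, hcap⟩ := exists_rootedTree_maxBelow_le hA c S.toFinset
    (by simpa using hx) (by simpa using hpath)
  rw [Set.coe_toFinset] at hspan hcap
  calc delta E e x v S ≤ treeCost e x S T := delta_le_treeCost hT hspan
    _ ≤ ∑ p ∈ T, e p.1 p.2 * c p :=
      sum_le_sum fun p hp => mul_le_mul_of_nonneg_left (hcap p hp).1 (he p (hTA hp))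
    _ ≤ ∑ p ∈ A, e p.1 p.2 * c p :=
      sum_le_sum_of_subset_of_nonneg hTA fun p hp _ => mul_nonneg (he p hp) (hc p hp)

theorem delta_union_le (hconn : ∀ a b : V, Relation.ReflTransGen E a b)
    (he : ∀ i j, E i j → 0 ≤ e i j) {S₁ S₂ : Set V} (hx : ∀ d ∈ S₁ ∪ S₂, 0 ≤ x d) :
    delta E e x v (S₁ ∪ S₂) ≤ delta E e x v S₁ + delta E e x v S₂ := by
  obtain ⟨T₁, hT₁, hspan₁, h₁⟩ := exists_treeCost_eq_delta (e := e) (x := x) hconn v S₁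
  obtain ⟨T₂, hT₂, hspan₂, h₂⟩ := exists_treeCost_eq_delta (e := e) (x := x) hconn v S₂
  have hx₁ : ∀ d ∈ S₁, 0 ≤ x d := fun d hd => hx d (.inl hd)
  have hx₂ : ∀ d ∈ S₂, 0 ≤ x d := fun d hd => hx d (.inr hd)
  -- each edge gets the sum of the loads it carries in `T₁` and in `T₂`
  set c : V × V → ℝ := fun p => (if p ∈ T₁ then maxBelow ↑T₁ S₁ x p.2 else 0) +
    (if p ∈ T₂ then maxBelow ↑T₂ S₂ x p.2 else 0)
  have hc_nonneg : ∀ p, 0 ≤ c p := fun p => by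
    apply add_nonneg <;> split_ifs
    exacts [maxBelow_nonneg hx₁, le_rfl, maxBelow_nonneg hx₂, le_rfl]
  have hc₁ : ∀ p ∈ T₁, maxBelow ↑T₁ S₁ x p.2 ≤ c p := fun p hp => by
    simp only [c, if_pos hp]
    exact le_add_of_nonneg_right (by split_ifs; exacts [maxBelow_nonneg hx₂, le_rfl])
  have hc₂ : ∀ p ∈ T₂, maxBelow ↑T₂ S₂ x p.2 ≤ c p := fun p hp => by
    simp only [c, if_pos hp]
    exact le_add_of_nonneg_left (by split_ifs; exacts [maxBelow_nonneg hx₁, le_rfl])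
  have hA : ∀ p ∈ T₁ ∪ T₂, E p.1 p.2 := fun p hp => by
    rcases mem_union.1 hp with hp | hp
    exacts [hT₁.edges p hp, hT₂.edges p hp]
  have hpath : ∀ d ∈ S₁ ∪ S₂, reach {p ∈ (↑(T₁ ∪ T₂) : Set (V × V)) | x d ≤ c p} v d := by
    rintro d (hd | hd)
    · exact reach_sep_of_maxBelow_le hd (hspan₁ d hd) (by simp) hc₁
    · exact reach_sep_of_maxBelow_le hd (hspan₂ d hd) (by simp) hc₂
  calc delta E e x v (S₁ ∪ S₂) ≤ ∑ p ∈ T₁ ∪ T₂, e p.1 p.2 * c p :=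
        delta_le_sum_of_reach hA (fun p hp => he _ _ (hA p hp)) c (fun p _ => hc_nonneg p) hx hpath
    _ = treeCost e x S₁ T₁ + treeCost e x S₂ T₂ := by
        simp only [c, mul_add, mul_ite, mul_zero, sum_add_distrib, sum_ite_mem,
          union_inter_cancel_left, union_inter_cancel_right]
        rfl
    _ = delta E e x v S₁ + delta E e x v S₂ := by rw [h₁, h₂]

theorem delta_le_delta_add (hconn : ∀ a b : V, Relation.ReflTransGen E a b)
    (he : ∀ i j, E i j → 0 ≤ e i j) {S : Set V} (hx : ∀ d ∈ S, 0 ≤ x d) {u : V} (hvu : E v u) :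
    delta E e x v S ≤ delta E e x u S + sSup (x '' S) * e v u := by
  obtain ⟨T, hT, hspan, hδ⟩ := exists_treeCost_eq_delta (e := e) (x := x) hconn u S
  have hvuT : (v, u) ∉ T := hT.root_no_parent v
  have hM : ∀ d ∈ S, x d ≤ sSup (x '' S) := fun d hd =>
    le_csSup (Set.toFinite _).bddAbove ⟨d, hd, rfl⟩
  set c : V × V → ℝ := fun p => if p = (v, u) then sSup (x '' S) else maxBelow ↑T S x p.2
  have hcT : ∀ p ∈ T, c p = maxBelow ↑T S x p.2 := fun p hp =>
    if_neg (ne_of_mem_of_not_mem hp hvuT)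
  have hc_nonneg : ∀ p, 0 ≤ c p := fun p => by
    simp only [c]
    split_ifs
    exacts [Real.sSup_nonneg (by rintro _ ⟨d, hd, rfl⟩; exact hx d hd), maxBelow_nonneg hx]
  have hA : ∀ p ∈ insert (v, u) T, E p.1 p.2 := fun p hp => by
    rcases mem_insert.1 hp with rfl | hp
    exacts [hvu, hT.edges p hp]
  have hpath : ∀ d ∈ S, reach {p ∈ (↑(insert (v, u) T) : Set (V × V)) | x d ≤ c p} v d :=
    fun d hd => .head ⟨mem_insert_self _ _, by simp [c, hM d hd]⟩
      (reach_sep_of_maxBelow_le hd (hspan d hd) (by simp [Set.subset_insert])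
        fun p hp => (hcT p hp).ge)
  calc delta E e x v S ≤ ∑ p ∈ insert (v, u) T, e p.1 p.2 * c p :=
        delta_le_sum_of_reach hA (fun p hp => he _ _ (hA p hp)) c (fun p _ => hc_nonneg p) hx hpath
    _ = delta E e x u S + sSup (x '' S) * e v u := by
        rw [sum_insert hvuT, sum_congr rfl fun p hp => by rw [hcT p hp], hδ]
        simp only [c, if_pos rfl]
        rw [mul_comm, add_comm]
        rfl

end Capacity

section Recurrence

variable {V : Type} {E : V → V → Prop} {e : V → V → ℝ} {x : V → ℝ} {D : Set V}
  {H : V → Set V → ℝ} {v : V} {S : Set V}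

def dpCandidates (H : V → Set V → ℝ) (E : V → V → Prop) (e : V → V → ℝ) (x : V → ℝ) (v : V)
    (S : Set V) : Set ℝ :=
  {c | S = {v} ∧ c = 0} ∪
    {c | ∃ F : Set V, F.Nonempty ∧ F ⊂ S ∧ c = H v F + H v (S \ F)} ∪
    {c | ∃ u : V, E v u ∧ c = H u S + sSup (x '' S) * e v u}

theorem finite_dpCandidates [Finite V] : (dpCandidates H E e x v S).Finite := by
  refine ((Set.finite_singleton 0).subset ?_).union
    ((Set.finite_range fun F : Set V => H v F + H v (S \ F)).subset ?_) |>.union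
    ((Set.finite_range fun u : V => H u S + sSup (x '' S) * e v u).subset ?_)
  · rintro _ ⟨-, rfl⟩; rfl
  · rintro _ ⟨F, -, -, rfl⟩; exact ⟨F, rfl⟩
  · rintro _ ⟨u, -, rfl⟩; exact ⟨u, rfl⟩

theorem dpCandidates_nonempty (hconn : ∀ a b : V, Relation.ReflTransGen E a b)
    (hS : S.Nonempty) : (dpCandidates H E e x v S).Nonempty := by
  obtain ⟨d, hd⟩ := hS
  by_cases hSd : S = {d}
  · rcases Relation.ReflTransGen.cases_head (hconn v d) with rfl | ⟨u, hvu, -⟩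
    · exact ⟨0, .inl (.inl ⟨hSd, rfl⟩)⟩
    · exact ⟨_, .inr ⟨u, hvu, rfl⟩⟩
  · refine ⟨_, .inl (.inr ⟨{d}, Set.singleton_nonempty d, ?_, rfl⟩)⟩
    exact Set.ssubset_iff_subset_ne.2 ⟨Set.singleton_subset_iff.2 hd, Ne.symm hSd⟩

end Recurrence

section FixedPoint

variable {V : Type} [Finite V] {E : V → V → Prop} {e : V → V → ℝ} {x : V → ℝ} {D : Set V}
  {H : V → Set V → ℝ} {v : V} {S : Set V}
  (hfix : ∀ v S, S.Nonempty → S ⊆ D → H v S = sInf (dpCandidates H E e x v S))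
include hfix

theorem le_of_mem_dpCandidates (hS : S.Nonempty) (hSD : S ⊆ D) {c : ℝ}
    (hc : c ∈ dpCandidates H E e x v S) : H v S ≤ c :=
  hfix v S hS hSD ▸ csInf_le finite_dpCandidates.bddBelow hc

theorem mem_dpCandidates (hconn : ∀ a b : V, Relation.ReflTransGen E a b) (hS : S.Nonempty)
    (hSD : S ⊆ D) : H v S ∈ dpCandidates H E e x v S :=
  hfix v S hS hSD ▸ (dpCandidates_nonempty hconn hS).csInf_mem finite_dpCandidates

section TreeCases

variable {T : Finset (V × V)} (he : ∀ p ∈ T, 0 ≤ e p.1 p.2) (hx : ∀ d ∈ S, 0 ≤ x d)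
  (hSD : S ⊆ D)
include he hx hSD

theorem le_treeCost_of_root_mem (hvS : v ∈ S)
    (hrest : (S \ {v}).Nonempty → H v (S \ {v}) ≤ treeCost e x (S \ {v}) T) :
    H v S ≤ treeCost e x S T := by
  have hS : S.Nonempty := ⟨v, hvS⟩
  have hv : H v {v} ≤ 0 := le_of_mem_dpCandidates hfix (Set.singleton_nonempty v)
    (Set.singleton_subset_iff.2 (hSD hvS)) (.inl (.inl ⟨rfl, rfl⟩))
  rcases (S \ {v}).eq_empty_or_nonempty with hempty | hne
  · have hSv : S = {v} :=
      (Set.sdiff_eq_empty.1 hempty).antisymm (Set.singleton_subset_iff.2 hvS)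
    exact (le_of_mem_dpCandidates hfix hS hSD (.inl (.inl ⟨hSv, rfl⟩))).trans
      (treeCost_nonneg he hx)
  have hvS' : {v} ⊂ S := (Set.ssubset_iff_of_subset (Set.singleton_subset_iff.2 hvS)).2 hne
  calc H v S ≤ H v {v} + H v (S \ {v}) := le_of_mem_dpCandidates hfix hS hSD
        (.inl (.inr ⟨{v}, Set.singleton_nonempty v, hvS', rfl⟩))
    _ ≤ 0 + treeCost e x (S \ {v}) T := add_le_add hv (hrest hne)
    _ ≤ treeCost e x S T :=
        (zero_add _).trans_le (treeCost_le_sum_of_subset subset_rfl he hx Set.sdiff_subset)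

theorem le_treeCost_of_reach_child (hS : S.Nonempty) {c : V} (hT : IsRootedTree E v ↑T)
    (hvc : (v, c) ∈ T) (hbelow : ∀ d ∈ S, reach ↑T c d)
    (hsub : H c S ≤ treeCost e x S (T.filter fun p => reach ↑T c p.1)) :
    H v S ≤ treeCost e x S T :=
  calc H v S ≤ H c S + sSup (x '' S) * e v c :=
        le_of_mem_dpCandidates hfix hS hSD (.inr ⟨c, hT.edges _ hvc, rfl⟩)
    _ ≤ e v c * sSup (x '' S) + treeCost e x S (T.filter fun p => reach ↑T c p.1) := by
        rw [add_comm, mul_comm]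
        exact add_le_add_right hsub _
    _ ≤ treeCost e x S T := mul_sSup_add_treeCost_subtree_le hT hvc he hx hbelow

theorem le_treeCost_of_split (hS : S.Nonempty) {F : Set V} (hF : F.Nonempty) (hFS : F ⊂ S)
    (Q : V × V → Prop) (h₁ : H v F ≤ treeCost e x F (T.filter Q))
    (h₂ : H v (S \ F) ≤ treeCost e x (S \ F) (T.filter fun p => ¬ Q p)) :
    H v S ≤ treeCost e x S T :=
  calc H v S ≤ H v F + H v (S \ F) :=
        le_of_mem_dpCandidates hfix hS hSD (.inl (.inr ⟨F, hF, hFS, rfl⟩))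
    _ ≤ _ := add_le_add h₁ h₂
    _ ≤ treeCost e x S T := treeCost_filter_add_le he hx Q hFS.subset Set.sdiff_subset

end TreeCases

theorem le_treeCost (hepos : ∀ i j, E i j → 0 ≤ e i j) (hx : ∀ d ∈ D, 0 ≤ x d)
    {T : Finset (V × V)} (hT : IsRootedTree E v ↑T) (hS : S.Nonempty) (hSD : S ⊆ D)
    (hspan : Spans ↑T v S) : H v S ≤ treeCost e x S T := by
  induction hn : #T + S.ncard using Nat.strong_induction_on generalizing v S T with
  | _ n ih =>
  subst hn
  have he : ∀ p ∈ T, 0 ≤ e p.1 p.2 := fun p hp => hepos _ _ (hT.edges p hp)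
  have hxS : ∀ d ∈ S, 0 ≤ x d := fun d hd => hx d (hSD hd)
  by_cases hvS : v ∈ S
  · exact le_treeCost_of_root_mem hfix he hxS hSD hvS fun hne =>
      ih _ (by have := Set.ncard_sdiff_singleton_lt_of_mem hvS; omega) hT hne
        (Set.sdiff_subset.trans hSD) (fun d hd => hspan d hd.1) rfl
  obtain ⟨d₀, hd₀⟩ := hS
  obtain ⟨c, hvc, hcd₀⟩ : ∃ c, (v, c) ∈ T ∧ reach ↑T c d₀ :=
    (Relation.ReflTransGen.cases_head (hspan d₀ hd₀)).resolve_left fun h => hvS (h ▸ hd₀)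
  by_cases hbelow : ∀ d ∈ S, reach ↑T c d
  · have hcard : #(T.filter fun p => reach ↑T c p.1) < #T :=
      card_lt_card (filter_ssubset.2 ⟨_, hvc, hT.not_reach_of_mem hvc⟩)
    refine le_treeCost_of_reach_child hfix he hxS hSD ⟨d₀, hd₀⟩ hT hvc hbelow
      (ih _ (by omega) ?_ ⟨d₀, hd₀⟩ hSD (fun d hd => ?_) rfl)
    · rw [coe_filter]; exact hT.subtree c
    · rw [coe_filter]; exact reach_subtree_of_reach (hbelow d hd)
  push Not at hbelow
  obtain ⟨d₁, hd₁, hcd₁⟩ := hbelow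
  set F := {d ∈ S | reach ↑T c d}
  have hFS : F ⊂ S :=
    (Set.ssubset_iff_of_subset (Set.sep_subset _ _)).2 ⟨d₁, hd₁, fun h => hcd₁ h.2⟩
  obtain ⟨⟨hT₁, hspan₁⟩, hT₂, hspan₂⟩ := hT.split_at_child hvc hspan
  have hF : (S \ F).ncard < S.ncard :=
    Set.ncard_lt_ncard (Set.sdiff_ssubset_left_iff.2 ⟨d₀, hd₀, show d₀ ∈ F from ⟨hd₀, hcd₀⟩⟩)
  have hcard₁ := card_filter_le T fun p => reach ↑T c p.2
  have hcard₂ := card_filter_le T fun p => ¬ reach ↑T c p.2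
  have hFcard := Set.ncard_lt_ncard hFS
  exact le_treeCost_of_split hfix he hxS hSD (F := F) ⟨d₀, hd₀⟩ ⟨d₀, hd₀, hcd₀⟩ hFS
    (fun p => reach ↑T c p.2)
    (ih _ (by omega) (by rwa [coe_filter]) ⟨d₀, hd₀, hcd₀⟩ (fun d hd => hSD hd.1)
      (by rwa [coe_filter]) rfl)
    (ih _ (by omega) (by rwa [coe_filter]) ⟨d₁, hd₁, fun h => hcd₁ h.2⟩
      (Set.sdiff_subset.trans hSD) (by rwa [coe_filter]) rfl)

end FixedPoint

section Optimality

variable {V : Type} [Fintype V] [DecidableEq V] {E : V → V → Prop} {e : V → V → ℝ}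
  {x : V → ℝ} {D : Set V} {H : V → Set V → ℝ} {v : V} {S : Set V}
  (hfix : ∀ v S, S.Nonempty → S ⊆ D → H v S = sInf (dpCandidates H E e x v S))
  (hconn : ∀ a b : V, Relation.ReflTransGen E a b)
include hfix hconn

theorem le_delta (hepos : ∀ i j, E i j → 0 ≤ e i j) (hx : ∀ d ∈ D, 0 ≤ x d) (hS : S.Nonempty)
    (hSD : S ⊆ D) : H v S ≤ delta E e x v S := by
  obtain ⟨T, hT, hreach⟩ := exists_spanning_rootedTree hconn v
  exact le_csInf ⟨_, T, hT, fun d _ => hreach d, rfl⟩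
    fun _ ⟨_, hT, hspan, hc⟩ => hc ▸ le_treeCost hfix hepos hx hT hS hSD hspan

theorem delta_le (hepos : ∀ i j, E i j → 0 < e i j) (hx : ∀ d ∈ D, 0 < x d) (hS : S.Nonempty)
    (hSD : S ⊆ D) : delta E e x v S ≤ H v S := by
  induction hn : S.ncard using Nat.strong_induction_on generalizing v S with
  | _ n ih =>
  subst hn
  have he : ∀ i j, E i j → 0 ≤ e i j := fun i j h => (hepos i j h).le
  have hxS : ∀ d ∈ S, 0 ≤ x d := fun d hd => (hx d (hSD hd)).le
  by_contra! hv
  obtain ⟨w, hw, hmin⟩ := (univ.filter fun w => H w S < delta E e x w S).exists_min_image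
    (H · S) ⟨v, by simpa using hv⟩
  simp only [mem_filter, mem_univ, true_and] at hw hmin
  refine hw.not_ge ?_
  rcases mem_dpCandidates hfix hconn hS hSD (v := w) with
    (⟨rfl, h⟩ | ⟨F, hF, hFS, h⟩) | ⟨u, hwu, h⟩
  · exact h ▸ delta_singleton_self_nonpos
  · have hSF : (S \ F).Nonempty := Set.sdiff_nonempty.2 hFS.not_subset
    calc delta E e x w S = delta E e x w (F ∪ S \ F) := by rw [Set.union_sdiff_cancel hFS.subset]
      _ ≤ delta E e x w F + delta E e x w (S \ F) :=
          delta_union_le hconn he (by rwa [Set.union_sdiff_cancel hFS.subset])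
      _ ≤ H w F + H w (S \ F) := add_le_add
          (ih _ (Set.ncard_lt_ncard hFS) hF (hFS.subset.trans hSD) rfl)
          (ih _ (Set.ncard_lt_ncard (Set.sdiff_ssubset_left_iff.2 ?_)) hSF
            (Set.sdiff_subset.trans hSD) rfl)
      _ = H w S := h.symm
    obtain ⟨d, hd⟩ := hF
    exact ⟨d, hFS.subset hd, hd⟩
  · obtain ⟨d, hd⟩ := hS
    have hM : 0 < sSup (x '' S) :=
      (hx d (hSD hd)).trans_le (le_csSup (Set.toFinite _).bddAbove ⟨d, hd, rfl⟩)
    have hu : delta E e x u S ≤ H u S := not_lt.1 fun hu => (hmin u hu).not_gt <| by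
      rw [h]
      exact lt_add_of_pos_right _ (mul_pos hM (hepos _ _ hwu))
    calc delta E e x w S ≤ delta E e x u S + sSup (x '' S) * e w u :=
          delta_le_delta_add hconn he hxS hwu
      _ ≤ H u S + sSup (x '' S) * e w u := by gcongr
      _ = H w S := h.symm

end Optimality

variable {V : Type} [DecidableEq V]

theorem stmt9_general [Fintype V] (E : V → V → Prop)
    (hconn : ∀ a b : V, Relation.ReflTransGen E a b)
    (e : V → V → ℝ) (hepos : ∀ i j, E i j → 0 < e i j)
    (D : Set V) (x : V → ℝ) (hx : ∀ d ∈ D, 0 < x d)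
    (H : V → Set V → ℝ)
    (hfix : ∀ v : V, ∀ S : Set V, S.Nonempty → S ⊆ D →
      H v S = sInf ({c | S = {v} ∧ c = 0} ∪
        {c | ∃ F : Set V, F.Nonempty ∧ F ⊂ S ∧ c = H v F + H v (S \ F)} ∪
        {c | ∃ u : V, E v u ∧ c = H u S + sSup (x '' S) * e v u})) :
    ∀ v : V, ∀ S : Set V, S.Nonempty → S ⊆ D → H v S = delta E e x v S :=
  fun _ _ hS hSD => (le_delta hfix hconn (fun i j h => (hepos i j h).le)
    (fun d hd => (hx d hd).le) hS hSD).antisymm (delta_le hfix hconn hepos hx hS hSD)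

/-- any function `H` satisfying the OST dynamic-programming
fixed-point equations (base case, subset merging, and edge relaxation) equals the
true minimum Steiner-flow cost `δ(v, S)` for every node `v` and nonempty `S ⊆ D`. -/
theorem stmt9 [Fintype V] (E : V → V → Prop) (hE : ∀ a b, E a b → E b a)
    (hconn : ∀ a b : V, Relation.ReflTransGen E a b)
    (e : V → V → ℝ) (hepos : ∀ i j, E i j → 0 < e i j)
    (D : Set V) (x : V → ℝ) (hx : ∀ d ∈ D, 0 < x d)
    (H : V → Set V → ℝ)
    (hbase : ∀ d ∈ D, H d {d} = 0)
    (hfix : ∀ v : V, ∀ S : Set V, S.Nonempty → S ⊆ D →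
      H v S = sInf ({c | S = {v} ∧ c = 0} ∪
        {c | ∃ F : Set V, F.Nonempty ∧ F ⊂ S ∧ c = H v F + H v (S \ F)} ∪
        {c | ∃ u : V, E v u ∧ c = H u S + sSup (x '' S) * e v u})) :
    ∀ v : V, ∀ S : Set V, S.Nonempty → S ⊆ D → H v S = delta E e x v S :=
  stmt9_general E hconn e hepos D x hx H hfix

end OST
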